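/- arXiv:2112.13359 — 8 statements merged into one kernel-verified Lean document; each statement's English description precedes it below -/
import Mathlib

section
/- Let D₁ and D₂ be finite digraphs, and let φ : D₁ → Walks(D₂) be a digraph homomorphism. Then φ is degenerate (i.e., maps some non-degenerate generalised bi-infinite walk in D₁ to a degenerate one) if and only if the induced functor from Walks(D₁) to Walks(D₂) maps some cycle of positive length in D₁ to a walk of length 0. -/
open CategoryTheory

/-- A generalised bi-infinite walk in a digraph (quiver) `V`: a digraph homomorphism
from the bi-infinite path digraph `ℤ` to `Walks(V)`, i.e. a choice of vertices and
of a finite walk for each integer edge. -/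
structure GBWalkQ (V : Type) [Quiver.{1} V] where
  vert : ℤ → V
  step : ∀ z : ℤ, Quiver.Path (vert z) (vert (z + 1))

/-- A bi-infinite sequence of lengths is "degenerate" if it is eventually `0` in the
positive or in the negative direction. -/
def TailZero (lenf : ℤ → ℕ) : Prop :=
  (∃ z : ℤ, ∀ n : ℤ, z < n → lenf n = 0) ∨ (∃ z : ℤ, ∀ n : ℤ, n < z → lenf n = 0)

/-- The length of the image of a finite walk under the functor induced by a digraph
homomorphism `φ : V₁ → Walks(V₂)`. -/
def mapLen {V₁ V₂ : Type} [Quiver.{1} V₁] [Quiver.{1} V₂] (φ : V₁ ⥤q Paths V₂)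
    {a b : V₁} (p : Quiver.Path a b) : ℕ :=
  Quiver.Path.length (composePath (φ.mapPath p))

lemma mapLen_comp {V₁ V₂ : Type} [Quiver.{1} V₁] [Quiver.{1} V₂] (φ : V₁ ⥤q Paths V₂)
    {a b c : V₁} (p : Quiver.Path a b) (q : Quiver.Path b c) :
    mapLen φ (p.comp q) = mapLen φ p + mapLen φ q := by
  simp only [mapLen, Prefunctor.mapPath_comp, composePath_comp]
  exact Quiver.Path.length_comp _ _

lemma seg {V₁ V₂ : Type} [Quiver.{1} V₁] [Quiver.{1} V₂] (φ : V₁ ⥤q Paths V₂)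
    (w : GBWalkQ V₁) (a : ℤ) (k : ℕ) :
    ∃ p : Quiver.Path (w.vert a) (w.vert (a + (k : ℤ))),
      p.length = ∑ i ∈ Finset.range k, (w.step (a + (i : ℤ))).length ∧
      mapLen φ p = ∑ i ∈ Finset.range k, mapLen φ (w.step (a + (i : ℤ))) := by
  induction k with
  | zero =>
    rw [show (a + ((0:ℕ):ℤ)) = a by simp]
    exact ⟨Quiver.Path.nil, by simp, by simp [mapLen]; rfl⟩
  | succ k ih =>
    obtain ⟨p, hl, hm⟩ := ih
    rw [show (a + ((k+1:ℕ):ℤ)) = (a + (k:ℤ)) + 1 by push_cast; ring]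
    refine ⟨p.comp (w.step (a + (k:ℤ))), ?_, ?_⟩
    · rw [Quiver.Path.length_comp, hl, Finset.sum_range_succ]
    · rw [mapLen_comp, hm, Finset.sum_range_succ]

lemma key {V₁ V₂ : Type} [Quiver.{1} V₁] [Quiver.{1} V₂] (φ : V₁ ⥤q Paths V₂)
    (w : GBWalkQ V₁) (a b : ℤ) (hab : a < b) (hv : w.vert a = w.vert b)
    (hpos : (w.step a).length ≠ 0)
    (h0 : ∀ n : ℤ, a ≤ n → n < b → mapLen φ (w.step n) = 0) :
    ∃ (v : V₁) (c : Quiver.Path v v), 0 < c.length ∧ mapLen φ c = 0 := by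
  set k := (b - a).toNat with hkdef
  have hk : a + (k : ℤ) = b := by omega
  have hs := seg φ w a k
  rw [hk, ← hv] at hs
  obtain ⟨p, hl, hm⟩ := hs
  refine ⟨w.vert a, p, ?_, ?_⟩
  · have hk1 : 0 < k := by omega
    have h0mem : (0:ℕ) ∈ Finset.range k := Finset.mem_range.mpr hk1
    have hle := Finset.single_le_sum
      (f := fun i : ℕ => (w.step (a + (i : ℤ))).length) (fun i _ => Nat.zero_le _) h0mem
    beta_reduce at hle
    rw [show (a + ((0:ℕ):ℤ)) = a by norm_num] at hle
    rw [hl]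
    exact lt_of_lt_of_le (Nat.pos_of_ne_zero hpos) hle
  · rw [hm]
    refine Finset.sum_eq_zero fun i hi => ?_
    have hi' : i < k := Finset.mem_range.mp hi
    exact h0 _ (by omega) (by omega)

/-- `φ : D₁ → Walks(D₂)` is degenerate (maps some non-degenerate generalised
bi-infinite walk to a degenerate one) iff the induced functor maps some cycle of
positive length in `D₁` to a walk of length `0`. -/
theorem stmt1 (V₁ V₂ : Type) [Quiver.{1} V₁] [Quiver.{1} V₂]
    [Fintype V₁] [Fintype V₂] [∀ a b : V₁, Fintype (a ⟶ b)] [∀ a b : V₂, Fintype (a ⟶ b)]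
    (φ : V₁ ⥤q Paths V₂) :
    (∃ w : GBWalkQ V₁, ¬ TailZero (fun z => (w.step z).length) ∧
        TailZero (fun z => mapLen φ (w.step z))) ↔
      ∃ (v : V₁) (c : Quiver.Path v v), 0 < c.length ∧ mapLen φ c = 0 := by
  constructor
  · rintro ⟨w, hnd, hd⟩
    rw [TailZero, not_or] at hnd
    obtain ⟨hnd1, hnd2⟩ := hnd
    push_neg at hnd1 hnd2
    rcases hd with ⟨z, hz⟩ | ⟨z, hz⟩
    · set S : Set ℤ := {n | z < n ∧ (w.step n).length ≠ 0} with hS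
      have hSinf : S.Infinite := by
        refine Set.infinite_of_not_bddAbove ?_
        rintro ⟨u, hu⟩
        obtain ⟨n, hn1, hn2⟩ := hnd1 (max z u)
        exact absurd (hu (show n ∈ S from ⟨by omega, hn2⟩)) (by omega)
      obtain ⟨x, hx, y, hy, hxy, hfxy⟩ :=
        hSinf.exists_ne_map_eq_of_mapsTo (f := w.vert)
          (Set.mapsTo_univ _ _) Set.finite_univ
      rcases lt_or_gt_of_ne hxy with h | h
      · exact key φ w x y h hfxy hx.2 fun n h1 h2 => hz n (by have := hx.1; omega)
      · exact key φ w y x h hfxy.symm hy.2 fun n h1 h2 => hz n (by have := hy.1; omega)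
    · set S : Set ℤ := {n | n < z ∧ (w.step n).length ≠ 0} with hS
      have hSinf : S.Infinite := by
        refine Set.infinite_of_not_bddBelow ?_
        rintro ⟨u, hu⟩
        obtain ⟨n, hn1, hn2⟩ := hnd2 (min z u)
        exact absurd (hu (show n ∈ S from ⟨by omega, hn2⟩)) (by omega)
      obtain ⟨x, hx, y, hy, hxy, hfxy⟩ :=
        hSinf.exists_ne_map_eq_of_mapsTo (f := w.vert)
          (Set.mapsTo_univ _ _) Set.finite_univ
      rcases lt_or_gt_of_ne hxy with h | h
      · exact key φ w x y h hfxy hx.2 fun n h1 h2 => hz n (by have := hy.1; omega)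
      · exact key φ w y x h hfxy.symm hy.2 fun n h1 h2 => hz n (by have := hx.1; omega)
  · rintro ⟨v, c, hc, hm⟩
    refine ⟨⟨fun _ => v, fun _ => c⟩, ?_, Or.inl ⟨0, fun n _ => hm⟩⟩
    rw [TailZero, not_or]
    push_neg
    exact ⟨fun z => ⟨z + 1, by omega, hc.ne'⟩, fun z => ⟨z - 1, by omega, hc.ne'⟩⟩
end

section
/- Any two flattenings of a non-degenerate generalised bi-infinite walk in a digraph D are translations of each other: if w₀ and w₁ are both flattenings of w, then there exists n ∈ Z such that w₁ = σⁿ ∘ w₀, where σ is the shift automorphism of the bi-infinite path digraph. -/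
structure Digraph' where
  V : Type
  E : Type
  s : E → V
  t : E → V

structure DHom (D₁ D₂ : Digraph') where
  vMap : D₁.V → D₂.V
  eMap : D₁.E → D₂.E
  hs : ∀ e, D₂.s (eMap e) = vMap (D₁.s e)
  ht : ∀ e, D₂.t (eMap e) = vMap (D₁.t e)

def BiWalk (D : Digraph') : Type :=
  { f : ℤ → D.E // ∀ i : ℤ, D.t (f i) = D.s (f (i + 1)) }

def biMap {D₁ D₂ : Digraph'} (φ : DHom D₁ D₂) (w : BiWalk D₁) : BiWalk D₂ :=
  ⟨fun i => φ.eMap (w.1 i), fun i => by rw [φ.ht, φ.hs, w.2 i]⟩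

structure FwdWalk (D : Digraph') where
  ed : ℕ → D.E
  chain : ∀ i : ℕ, D.t (ed i) = D.s (ed (i + 1))

structure BwdWalk (D : Digraph') where
  ed : ℕ → D.E
  chain : ∀ i : ℕ, D.t (ed (i + 1)) = D.s (ed i)

/-- UDAF digraph condition: for each vertex, the number of infinite forwards walks
from it and of infinite backwards walks to it are each `≠ 1`. -/
def IsUDAF (D : Digraph') : Prop :=
  (∀ v : D.V, ¬∃! p : FwdWalk D, D.s (p.ed 0) = v) ∧
  (∀ v : D.V, ¬∃! p : BwdWalk D, D.t (p.ed 0) = v)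

/-- A generalised bi-infinite walk in `D`, recorded by its vertex sequence and,
for each `z`, the finite walk (a length and a chained list of edges) labelling the
edge `(z, z+1)`. -/
structure GBW (D : Digraph') where
  vert : ℤ → D.V
  len : ℤ → ℕ
  ed : ∀ z : ℤ, Fin (len z) → D.E
  hchain : ∀ (z : ℤ) (i : Fin (len z)) (h : (i : ℕ) + 1 < len z),
    D.t (ed z i) = D.s (ed z ⟨(i : ℕ) + 1, h⟩)
  hfirst : ∀ (z : ℤ) (h : 0 < len z), D.s (ed z ⟨0, h⟩) = vert z
  hlast : ∀ (z : ℤ) (h : 0 < len z), D.t (ed z ⟨len z - 1, by omega⟩) = vert (z + 1)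
  hnil : ∀ z : ℤ, len z = 0 → vert (z + 1) = vert z

/-- `w₀` is a flattening of the generalised bi-infinite walk `w`. -/
def IsFlat (D : Digraph') (w : GBW D) (w₀ : BiWalk D) : Prop :=
  ∃ f : ℤ → ℤ, (∀ z : ℤ, f (z + 1) = f z + w.len z) ∧
    ∀ (z : ℤ) (i : Fin (w.len z)), w₀.1 (f z + (i : ℕ)) = w.ed z i


/-!
Let `f₀, f₁` be the block offsets of the two flattenings. Both satisfy
`f (z + 1) = f z + ‖(z, z+1)w‖`, so they differ by a constant `n`. The offsets `f₁` are monotone,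
and non-degeneracy makes them unbounded in both directions, so every `i : ℤ` falls into some
block `[f₁ z, f₁ (z + 1))`. There `w₁` and `w₀` (shifted by `n`) both read off the walk
`(z, z+1)w`.
-/

theorem Int.not_bddAbove_range_of_forall_exists_lt {α : Type*} [Nonempty α] {f : α → ℤ}
    (h : ∀ a, ∃ b, f a < f b) : ¬ BddAbove (Set.range f) := fun hbdd => by
  obtain ⟨a, ha⟩ := Int.csSup_mem (Set.range_nonempty f) hbdd
  obtain ⟨b, hb⟩ := h a
  exact hb.not_ge (ha ▸ le_csSup hbdd ⟨b, rfl⟩)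

theorem Int.not_bddBelow_range_of_forall_exists_lt {α : Type*} [Nonempty α] {f : α → ℤ}
    (h : ∀ a, ∃ b, f b < f a) : ¬ BddBelow (Set.range f) := fun hbdd => by
  obtain ⟨a, ha⟩ := Int.csInf_mem (Set.range_nonempty f) hbdd
  obtain ⟨b, hb⟩ := h a
  exact hb.not_ge (ha ▸ csInf_le hbdd ⟨b, rfl⟩)

theorem Monotone.exists_apply_le_lt_apply_succ {f : ℤ → ℤ} (hf : Monotone f)
    (hab : ¬ BddAbove (Set.range f)) (hbb : ¬ BddBelow (Set.range f)) (i : ℤ) :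
    ∃ z, f z ≤ i ∧ i < f (z + 1) := by
  obtain ⟨_, ⟨z₁, rfl⟩, hz₁⟩ := not_bddBelow_iff.mp hbb (i + 1)
  obtain ⟨_, ⟨z₂, rfl⟩, hz₂⟩ := not_bddAbove_iff.mp hab i
  obtain ⟨z, hz, hmax⟩ := Int.exists_greatest_of_bdd (P := fun z => f z ≤ i)
    ⟨z₂, fun z hz => (hf.reflect_lt (hz.trans_lt hz₂)).le⟩ ⟨z₁, by omega⟩
  exact ⟨z, hz, lt_of_not_ge fun h => by have := hmax _ h; omega⟩

theorem Int.sub_eq_sub_zero_of_succ_eq_add {f g d : ℤ → ℤ} (hf : ∀ z, f (z + 1) = f z + d z)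
    (hg : ∀ z, g (z + 1) = g z + d z) (z : ℤ) : f z - g z = f 0 - g 0 := by
  induction z using Int.induction_on with
  | zero => rfl
  | succ k ih => rw [hf, hg, ← ih]; ring
  | pred k ih =>
    have hfk := hf (-k - 1)
    have hgk := hg (-k - 1)
    rw [sub_add_cancel] at hfk hgk
    omega

theorem stmt2_general (D : Digraph') (w : GBW D)
    (hnd : ¬ ((∃ z : ℤ, ∀ n : ℤ, z < n → w.len n = 0) ∨
      (∃ z : ℤ, ∀ n : ℤ, n < z → w.len n = 0)))
    (w₀ w₁ : BiWalk D) (h₀ : IsFlat D w w₀) (h₁ : IsFlat D w w₁) :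
    ∃ n : ℤ, ∀ i : ℤ, w₁.1 i = w₀.1 (i + n) := by
  obtain ⟨f₀, hf₀, he₀⟩ := h₀
  obtain ⟨f₁, hf₁, he₁⟩ := h₁
  have hmono : Monotone f₁ := monotone_int_of_le_succ fun z => by rw [hf₁]; omega
  push Not at hnd
  obtain ⟨hfwd, hbwd⟩ := hnd
  have hab : ¬ BddAbove (Set.range f₁) := Int.not_bddAbove_range_of_forall_exists_lt fun z => by
    obtain ⟨n, hzn, hn⟩ := hfwd z
    exact ⟨n + 1, (hmono hzn.le).trans_lt (by rw [hf₁]; omega)⟩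
  have hbb : ¬ BddBelow (Set.range f₁) := Int.not_bddBelow_range_of_forall_exists_lt fun z => by
    obtain ⟨n, hnz, hn⟩ := hbwd z
    exact ⟨n, (by rw [hf₁]; omega : f₁ n < f₁ (n + 1)).trans_le (hmono (by omega))⟩
  refine ⟨f₀ 0 - f₁ 0, fun i => ?_⟩
  obtain ⟨z, hzi, hiz⟩ := hmono.exists_apply_le_lt_apply_succ hab hbb i
  obtain ⟨j, rfl⟩ : ∃ j : ℕ, i = f₁ z + j := ⟨(i - f₁ z).toNat, by omega⟩
  have hj : j < w.len z := by rw [hf₁] at hiz; omega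
  have hoff := Int.sub_eq_sub_zero_of_succ_eq_add hf₀ hf₁ z
  calc w₁.1 (f₁ z + j) = w.ed z ⟨j, hj⟩ := he₁ z ⟨j, hj⟩
    _ = w₀.1 (f₀ z + j) := (he₀ z ⟨j, hj⟩).symm
    _ = w₀.1 (f₁ z + j + (f₀ 0 - f₁ 0)) := by rw [← hoff]; ring_nf

/-- Any two flattenings of a non-degenerate generalised bi-infinite walk are
translations of each other. -/
theorem stmt2 (D : Digraph') [Fintype D.V] [Fintype D.E] (w : GBW D)
    (hnd : ¬ ((∃ z : ℤ, ∀ n : ℤ, z < n → w.len n = 0) ∨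
      (∃ z : ℤ, ∀ n : ℤ, n < z → w.len n = 0)))
    (w₀ w₁ : BiWalk D) (h₀ : IsFlat D w w₀) (h₁ : IsFlat D w w₁) :
    ∃ n : ℤ, ∀ i : ℤ, w₁.1 i = w₀.1 (i + n) :=
  stmt2_general D w hnd w₀ w₁ h₀ h₁
end

section
/- Let D be a finite digraph and m ≤ 0 ≤ n integers. Define the past-future digraph PF(D, m, n) with vertex set Hom(Z_[m,n], D) and edge set Hom(Z_[m,n+1], D), where an edge e goes from its restriction to Z_[m,n] to the restriction of σ ∘ e to Z_[m,n]. Then the standard map f : PF(D,m,n) → D given by (h)f_V = (0)h_V on vertices and (h)f_E = (0,1)h_E on edges is a folding: it induces a bijection between bi-infinite walks in PF(D,m,n) and bi-infinite walks in D. -/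
/-- A finite walk of length `L` through `D`, with its vertex sequence. -/
structure FWalk (D : Digraph') (L : ℕ) where
  vert : Fin (L + 1) → D.V
  ed : Fin L → D.E
  hs : ∀ i : Fin L, D.s (ed i) = vert i.castSucc
  ht : ∀ i : Fin L, D.t (ed i) = vert i.succ

def finInit {D : Digraph'} {L : ℕ} (e : FWalk D (L + 1)) : FWalk D L where
  vert i := e.vert i.castSucc
  ed i := e.ed i.castSucc
  hs i := e.hs i.castSucc
  ht i := by rw [e.ht i.castSucc, Fin.succ_castSucc]

def finTail {D : Digraph'} {L : ℕ} (e : FWalk D (L + 1)) : FWalk D L where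
  vert i := e.vert i.succ
  ed i := e.ed i.succ
  hs i := by rw [e.hs i.succ, ← Fin.succ_castSucc]
  ht i := e.ht i.succ

/-- The past-future digraph of `D` with `L` total letters of memory:
vertices are walks of length `L`, edges are walks of length `L + 1`. -/
def PFD (D : Digraph') (L : ℕ) : Digraph' where
  V := FWalk D L
  E := FWalk D (L + 1)
  s := finInit
  t := finTail

/-- The standard folding of the past-future digraph onto `D`. -/
def stdFold (D : Digraph') (L : ℕ) : DHom (PFD D L) D where
  vMap w := w.vert 0
  eMap e := e.ed 0
  hs e := e.hs 0
  ht e := e.ht 0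

/-
A bi-infinite walk `W` in the past-future digraph is recovered from its image `w` in `D`:
consecutive edges `W i`, `W (i + 1)` overlap in all but one letter, so the `k`-th letter of
`W i` is the first letter of `W (i + k)`, which is `w (i + k)`. Conversely every bi-infinite
walk `w` in `D` lifts, by sliding a window of `L + 1` letters along it.
-/

variable {D : Digraph'}

@[ext]
theorem FWalk.ext {L : ℕ} {a b : FWalk D L} (hv : a.vert = b.vert) (he : a.ed = b.ed) :
    a = b := by
  cases a; cases b; simp_all

namespace BiWalk

def window (w : BiWalk D) (L : ℕ) (i : ℤ) : FWalk D L where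
  vert j := D.s (w.1 (i + (j : ℕ)))
  ed j := w.1 (i + (j : ℕ))
  hs _ := rfl
  ht j := by
    rw [w.2, Fin.val_succ]
    push_cast
    ring_nf

theorem finInit_window (w : BiWalk D) (L : ℕ) (i : ℤ) :
    finInit (w.window (L + 1) i) = w.window L i :=
  rfl

theorem finTail_window (w : BiWalk D) (L : ℕ) (i : ℤ) :
    finTail (w.window (L + 1) i) = w.window L (i + 1) := by
  ext j <;> simp only [finTail, window, Fin.val_succ] <;> push_cast <;> ring_nf

def windows (w : BiWalk D) (L : ℕ) : BiWalk (PFD D L) :=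
  ⟨w.window (L + 1), fun i => (finTail_window w L i).trans (finInit_window w L (i + 1)).symm⟩

theorem biMap_stdFold_windows (w : BiWalk D) (L : ℕ) : biMap (stdFold D L) (w.windows L) = w := by
  apply Subtype.ext
  funext i
  simp [biMap, stdFold, windows, window]

variable {L : ℕ} (W : BiWalk (PFD D L))

theorem ed_eq_biMap_stdFold (k : Fin (L + 1)) (i : ℤ) :
    (W.1 i).ed k = (biMap (stdFold D L) W).1 (i + (k : ℕ)) := by
  induction k using Fin.induction generalizing i with
  | zero => simp [biMap, stdFold]
  | succ k ih =>
    have overlap : (W.1 i).ed k.succ = (W.1 (i + 1)).ed k.castSucc :=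
      congrFun (congrArg FWalk.ed (W.2 i)) k
    rw [overlap, ih, Fin.val_succ, Fin.val_castSucc]
    push_cast
    ring_nf

theorem vert_eq_biMap_stdFold (k : Fin (L + 2)) (i : ℤ) :
    (W.1 i).vert k = D.s ((biMap (stdFold D L) W).1 (i + (k : ℕ))) := by
  induction k using Fin.lastCases with
  | last =>
    rw [← Fin.succ_last, ← (W.1 i).ht, ed_eq_biMap_stdFold, (biMap (stdFold D L) W).2,
      Fin.val_succ, Fin.val_last]
    push_cast
    ring_nf
  | cast k => rw [← (W.1 i).hs, ed_eq_biMap_stdFold, Fin.val_castSucc]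

theorem windows_biMap_stdFold : (biMap (stdFold D L) W).windows L = W := by
  apply Subtype.ext
  funext i
  apply FWalk.ext <;> funext k
  · exact (vert_eq_biMap_stdFold W k i).symm
  · exact (ed_eq_biMap_stdFold W k i).symm

end BiWalk

theorem stdFold_biMap_bijective (D : Digraph') (L : ℕ) : Function.Bijective (biMap (stdFold D L)) :=
  Function.bijective_iff_has_inverse.mpr
    ⟨(BiWalk.windows · L), BiWalk.windows_biMap_stdFold, (BiWalk.biMap_stdFold_windows · L)⟩

theorem stmt4_general (D : Digraph') (m n : ℤ) :
    Function.Bijective (biMap (stdFold D (n - m).toNat)) :=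
  stdFold_biMap_bijective D _

/-- The standard map from the past-future digraph `PF(D, m, n)` to `D` is a folding:
it induces a bijection on bi-infinite walks. -/
theorem stmt4 (D : Digraph') [Fintype D.V] [Fintype D.E] (m n : ℤ) (hm : m ≤ 0) (hn : 0 ≤ n) :
    Function.Bijective (biMap (stdFold D (n - m).toNat)) :=
  stmt4_general D m n
end

section
/- The intersection of two unindexed rays in an UDAF digraph is either empty or again an unindexed ray. Consequently, any two finite partitions of an unindexed beam into unindexed rays admit a common refinement into unindexed rays. -/
/-- Two bi-infinite walks are shift-equivalent (have the same flattening set). -/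
def routeSetoid (D : Digraph') : Setoid (BiWalk D) where
  r w₁ w₂ := ∃ n : ℤ, ∀ i : ℤ, w₂.1 i = w₁.1 (i + n)
  iseqv := by
    constructor
    · intro w; exact ⟨0, fun i => by simp⟩
    · rintro w₁ w₂ ⟨n, h⟩
      refine ⟨-n, fun i => ?_⟩
      have h' := h (i + -n)
      rw [show i + -n + n = i by ring] at h'
      exact h'.symm
    · rintro w₁ w₂ w₃ ⟨n, h⟩ ⟨m, h'⟩
      refine ⟨n + m, fun i => ?_⟩
      rw [h' i, h (i + m), show i + m + n = i + (n + m) by ring]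

/-- Routes: shift-orbits of bi-infinite walks. -/
def Route (D : Digraph') := Quotient (routeSetoid D)

/-- Backward rationality of (the negative tail of) a bi-infinite walk. -/
def BackRational (D : Digraph') (w : BiWalk D) : Prop :=
  ∃ (n : ℤ) (m : ℕ), n ≤ 0 ∧ 1 ≤ m ∧ ∀ i : ℤ, i < n → w.1 (i + m) = w.1 i

/-- The indexed ray `R(w, n)`: all bi-infinite walks agreeing with `w` on `(-∞, n]`. -/
def RaySet (D : Digraph') (w : BiWalk D) (n : ℤ) : Set (BiWalk D) :=
  {h | ∀ i : ℤ, i < n → h.1 i = w.1 i}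

/-- Unindexed rays: sets of routes of elements of a ray `R(w, n)` with `w`
backward-irrational. -/
def IsURay (D : Digraph') (S : Set (Route D)) : Prop :=
  ∃ (w : BiWalk D) (n : ℤ), ¬ BackRational D w ∧
    S = {r | ∃ h ∈ RaySet D w n, Quotient.mk (routeSetoid D) h = r}

/-- A partition of an unindexed beam `B` into finitely many unindexed rays. -/
def IsURayPartition (D : Digraph') (B : Set (Route D)) (P : Set (Set (Route D))) : Prop :=
  P.Finite ∧ (∀ S ∈ P, IsURay D S) ∧ ⋃₀ P = B ∧
    ∀ S ∈ P, ∀ T ∈ P, S ≠ T → Disjoint S T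

/-- Shift a bi-infinite walk by `z`. -/
def shiftW {D : Digraph'} (g : BiWalk D) (z : ℤ) : BiWalk D :=
  ⟨fun i => g.1 (i + z), fun i => by
    have h := g.2 (i + z)
    rwa [show i + z + 1 = i + 1 + z by ring] at h⟩

lemma shift_equiv {D : Digraph'} (g : BiWalk D) (z : ℤ) :
    Quotient.mk (routeSetoid D) (shiftW g z) = Quotient.mk (routeSetoid D) g :=
  (Quotient.sound (show (routeSetoid D).r g (shiftW g z) from ⟨z, fun _ => rfl⟩)).symm

lemma uray_subset {D : Digraph'} (S₁ S₂ : Set (Route D))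
    (h₁ : IsURay D S₁) (h₂ : IsURay D S₂) (hne : (S₁ ∩ S₂).Nonempty) :
    S₁ ⊆ S₂ ∨ S₂ ⊆ S₁ := by
  obtain ⟨w₁, n₁, -, rfl⟩ := h₁
  obtain ⟨w₂, n₂, -, rfl⟩ := h₂
  obtain ⟨r, ⟨h₁, hh₁, he₁⟩, ⟨h₂, hh₂, he₂⟩⟩ := hne
  obtain ⟨z, hz⟩ := Quotient.exact (he₁.trans he₂.symm)
  have key : ∀ i : ℤ, i < n₂ → i < n₁ - z → w₂.1 i = w₁.1 (i + z) := by
    intro i hi hi'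
    rw [← hh₂ i hi, hz i, hh₁ (i + z) (by omega)]
  rcases le_total n₂ (n₁ - z) with hle | hle
  · left
    rintro r' ⟨g, hg, hgr⟩
    refine ⟨shiftW g z, fun i hi => ?_, (shift_equiv g z).trans hgr⟩
    show g.1 (i + z) = w₂.1 i
    rw [hg (i + z) (by omega), key i hi (by omega)]
  · right
    rintro r' ⟨g, hg, hgr⟩
    refine ⟨shiftW g (-z), fun i hi => ?_, (shift_equiv g (-z)).trans hgr⟩
    show g.1 (i + -z) = w₁.1 i
    rw [hg (i + -z) (by omega), key (i + -z) (by omega) (by omega),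
      show i + -z + z = i by ring]

lemma uray_inter {D : Digraph'} (S₁ S₂ : Set (Route D))
    (h₁ : IsURay D S₁) (h₂ : IsURay D S₂) :
    S₁ ∩ S₂ = ∅ ∨ IsURay D (S₁ ∩ S₂) := by
  rcases Set.eq_empty_or_nonempty (S₁ ∩ S₂) with h | h
  · exact Or.inl h
  · right
    rcases uray_subset S₁ S₂ h₁ h₂ h with hs | hs
    · rwa [Set.inter_eq_left.mpr hs]
    · rwa [Set.inter_eq_right.mpr hs]

/-- In an UDAF digraph, the intersection of two unindexed rays is empty or an
unindexed ray; consequently any two finite partitions of an unindexed beam into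
unindexed rays admit a common refinement into unindexed rays. -/
theorem stmt9 (D : Digraph') [Fintype D.V] [Fintype D.E] (hU : IsUDAF D) :
    (∀ S₁ S₂ : Set (Route D), IsURay D S₁ → IsURay D S₂ →
      S₁ ∩ S₂ = ∅ ∨ IsURay D (S₁ ∩ S₂)) ∧
    (∀ (B : Set (Route D)) (P₁ P₂ : Set (Set (Route D))),
      IsURayPartition D B P₁ → IsURayPartition D B P₂ →
      ∃ P₃, IsURayPartition D B P₃ ∧
        (∀ S ∈ P₁, S = ⋃₀ {T | T ∈ P₃ ∧ T ⊆ S}) ∧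
        (∀ S ∈ P₂, S = ⋃₀ {T | T ∈ P₃ ∧ T ⊆ S})) := by
  refine ⟨fun S₁ S₂ h₁ h₂ => uray_inter S₁ S₂ h₁ h₂, ?_⟩
  intro B P₁ P₂ hP₁ hP₂
  obtain ⟨hf₁, hu₁, hU₁, hd₁⟩ := hP₁
  obtain ⟨hf₂, hu₂, hU₂, hd₂⟩ := hP₂
  refine ⟨{X | X.Nonempty ∧ ∃ S ∈ P₁, ∃ T ∈ P₂, X = S ∩ T}, ⟨?_, ?_, ?_, ?_⟩, ?_, ?_⟩
  · exact (Set.Finite.image2 (· ∩ ·) hf₁ hf₂).subset (by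
      rintro X ⟨-, S, hS, T, hT, rfl⟩
      exact Set.mem_image2_of_mem hS hT)
  · rintro X ⟨hXne, S, hS, T, hT, rfl⟩
    rcases uray_inter S T (hu₁ S hS) (hu₂ T hT) with h | h
    · exact absurd h hXne.ne_empty
    · exact h
  · apply Set.Subset.antisymm
    · rintro r ⟨X, ⟨-, S, hS, T, hT, rfl⟩, hr⟩
      exact hU₁ ▸ ⟨S, hS, hr.1⟩
    · intro r hr
      obtain ⟨S, hS, hrS⟩ := (hU₁.symm ▸ hr : r ∈ ⋃₀ P₁)
      obtain ⟨T, hT, hrT⟩ := (hU₂.symm ▸ hr : r ∈ ⋃₀ P₂)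
      exact ⟨S ∩ T, ⟨⟨r, hrS, hrT⟩, S, hS, T, hT, rfl⟩, hrS, hrT⟩
  · rintro X ⟨-, S, hS, T, hT, rfl⟩ Y ⟨-, S', hS', T', hT', rfl⟩ hne
    rw [Set.disjoint_left]
    rintro r ⟨hrS, hrT⟩ ⟨hrS', hrT'⟩
    have hSS : S = S' := by
      by_contra h
      exact Set.disjoint_left.mp (hd₁ S hS S' hS' h) hrS hrS'
    have hTT : T = T' := by
      by_contra h
      exact Set.disjoint_left.mp (hd₂ T hT T' hT' h) hrT hrT'
    exact hne (by rw [hSS, hTT])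
  · intro S hS
    apply Set.Subset.antisymm
    · intro r hr
      have hrB : r ∈ B := hU₁ ▸ ⟨S, hS, hr⟩
      obtain ⟨T, hT, hrT⟩ := (hU₂.symm ▸ hrB : r ∈ ⋃₀ P₂)
      exact ⟨S ∩ T, ⟨⟨⟨r, hr, hrT⟩, S, hS, T, hT, rfl⟩, Set.inter_subset_left⟩, hr, hrT⟩
    · rintro r ⟨X, ⟨-, hXS⟩, hr⟩
      exact hXS hr
  · intro T hT
    apply Set.Subset.antisymm
    · intro r hr
      have hrB : r ∈ B := hU₂ ▸ ⟨T, hT, hr⟩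
      obtain ⟨S, hS, hrS⟩ := (hU₁.symm ▸ hrB : r ∈ ⋃₀ P₁)
      exact ⟨S ∩ T, ⟨⟨⟨r, hrS, hr⟩, S, hS, T, hT, rfl⟩, Set.inter_subset_right⟩, hrS, hr⟩
    · rintro r ⟨X, ⟨-, hXT⟩, hr⟩
      exact hXT hr
end

section
/- Let D be an UDAF digraph and define the refinement relation on finite multisets over the vertices of the core D°: M₂ is an elementary refinement of M₁ if it is obtained by removing one copy of a vertex v (present in M₁) and adding the multiset of endpoints of a finite prefix-free exhaustive family P of walks from v (every infinite forwards walk from v in D° begins with exactly one element of P). Then the equivalence relation 'having a common refinement' is an equivalence relation; in particular it is transitive. -/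
/-- Edges lying on some bi-infinite walk. -/
def CoreE (D : Digraph') : Set D.E := {e | ∃ w : BiWalk D, ∃ i : ℤ, w.1 i = e}

/-- Vertices lying on some bi-infinite walk. -/
def CoreV (D : Digraph') : Set D.V := {v | ∃ w : BiWalk D, ∃ i : ℤ, D.s (w.1 i) = v}

structure FinWalk (D : Digraph') where
  start : D.V
  ed : List D.E
  chain : List.Chain' (fun a b => D.t a = D.s b) ed
  hstart : ∀ e ∈ ed.head?, D.s e = start

def endVert (D : Digraph') (p : FinWalk D) : D.V :=
  p.ed.getLast?.elim p.start D.t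

/-- The infinite forwards walk `q` begins with the finite walk `p`. -/
def Begins (D : Digraph') (q : FwdWalk D) (p : FinWalk D) : Prop :=
  D.s (q.ed 0) = p.start ∧ ∀ (i : ℕ) (h : i < p.ed.length), q.ed i = p.ed.get ⟨i, h⟩

/-- `M₂` is obtained from `M₁` by replacing one copy of a core vertex `v` by the
endpoint multiset of a finite exhaustive prefix-free family of core walks from `v`. -/
def ElemRefine (D : Digraph') (M₁ M₂ : ↥(CoreV D) → ℕ) : Prop := by
  classical
  exact ∃ (v : ↥(CoreV D)) (P : Finset (FinWalk D)),
    0 < M₁ v ∧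
    (∀ p ∈ P, p.start = v.1 ∧ ∀ e ∈ p.ed, e ∈ CoreE D) ∧
    (∀ q : FwdWalk D, D.s (q.ed 0) = v.1 → (∀ i, q.ed i ∈ CoreE D) →
      ∃! p, p ∈ P ∧ Begins D q p) ∧
    ∀ w : ↥(CoreV D),
      M₂ w = (M₁ w - (if w = v then 1 else 0)) + (P.filter (fun p => endVert D p = w.1)).card

/-- Refinement: a finite composite of elementary refinements. -/
def Refine (D : Digraph') : (↥(CoreV D) → ℕ) → (↥(CoreV D) → ℕ) → Prop :=
  Relation.ReflTransGen (ElemRefine D)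

open scoped Classical

section Walks

variable {D : Digraph'}

theorem t_mem_coreV_of_mem_coreE {e : D.E} (he : e ∈ CoreE D) : D.t e ∈ CoreV D := by
  obtain ⟨w, i, rfl⟩ := he
  exact ⟨w, i + 1, (w.2 i).symm⟩

theorem coreV_subset_range_s : CoreV D ⊆ Set.range D.s := fun _ ⟨w, i, h⟩ => ⟨w.1 i, h⟩

noncomputable instance [Finite D.E] : Fintype (CoreV D) :=
  ((Set.finite_range D.s).subset coreV_subset_range_s).fintype

theorem exists_fwdWalk_of_mem_coreV {v : D.V} (hv : v ∈ CoreV D) :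
    ∃ q : FwdWalk D, D.s (q.ed 0) = v ∧ ∀ i, q.ed i ∈ CoreE D := by
  obtain ⟨w, i, rfl⟩ := hv
  refine ⟨⟨fun n => w.1 (i + n), fun n => ?_⟩, by simp, fun n => ⟨w, i + n, rfl⟩⟩
  simpa [add_assoc] using w.2 (i + n)

namespace FinWalk

@[ext] theorem ext {p q : FinWalk D} (hs : p.start = q.start) (he : p.ed = q.ed) : p = q := by
  cases p; cases q; simp_all

def nil (v : D.V) : FinWalk D := ⟨v, [], List.isChain_nil, by simp⟩

theorem endVert_of_ed_eq_nil {p : FinWalk D} (h : p.ed = []) : endVert D p = p.start := by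
  simp [endVert, h]

theorem endVert_of_ed_ne_nil {p : FinWalk D} (h : p.ed ≠ []) :
    endVert D p = D.t (p.ed.getLast h) := by
  simp [endVert, List.getLast?_eq_some_getLast h]

theorem endVert_mem_coreV {p : FinWalk D} (hs : p.start ∈ CoreV D)
    (hc : ∀ e ∈ p.ed, e ∈ CoreE D) : endVert D p ∈ CoreV D := by
  rcases eq_or_ne p.ed [] with h | h
  · rwa [endVert_of_ed_eq_nil h]
  · rw [endVert_of_ed_ne_nil h]
    exact t_mem_coreV_of_mem_coreE (hc _ (p.ed.getLast_mem h))

theorem s_ed_get_zero (p : FinWalk D) (h : 0 < p.ed.length) : D.s (p.ed.get ⟨0, h⟩) = p.start :=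
  p.hstart _ (by simp [List.head?_eq_getElem?, h])

def take (p : FinWalk D) (k : ℕ) : FinWalk D where
  start := p.start
  ed := p.ed.take k
  chain := p.chain.take k
  hstart e he := p.hstart e (by cases k <;> cases h : p.ed <;> simp_all)

noncomputable def drop (p : FinWalk D) (k : ℕ) : FinWalk D where
  start := endVert D (p.take k)
  ed := p.ed.drop k
  chain := p.chain.drop k
  hstart e he := by
    rcases Nat.eq_zero_or_pos k with rfl | hk
    · simpa [take, endVert] using p.hstart e (by simpa using he)
    · have hne : p.ed.take k ≠ [] := by
        rintro h
        rcases List.take_eq_nil_iff.mp h with h | h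
        · omega
        · simp [h] at he
      have hchain : (p.ed.take k ++ p.ed.drop k).IsChain (fun a b => D.t a = D.s b) := by
        rw [List.take_append_drop]
        exact p.chain
      rw [← (List.isChain_append.mp hchain).2.2 _ (List.getLast?_eq_some_getLast hne) e he]
      exact (endVert_of_ed_ne_nil (p := p.take k) hne).symm

noncomputable def append (p r : FinWalk D) (h : r.start = endVert D p) : FinWalk D where
  start := p.start
  ed := p.ed ++ r.ed
  chain := by
    refine List.isChain_append.mpr ⟨p.chain, r.chain, fun a ha b hb => ?_⟩
    rw [r.hstart b hb, h, endVert, Option.mem_def.mp ha]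
    rfl
  hstart e he := by
    rcases hp : p.ed with _ | ⟨a, l⟩
    · rw [hp, List.nil_append] at he
      rw [r.hstart e he, h, endVert_of_ed_eq_nil hp]
    · rw [hp, List.cons_append, List.head?_cons, Option.mem_some_iff] at he
      exact he ▸ p.hstart a (by simp [hp])

@[simp] theorem take_start (p : FinWalk D) (k : ℕ) : (p.take k).start = p.start := rfl
@[simp] theorem take_ed (p : FinWalk D) (k : ℕ) : (p.take k).ed = p.ed.take k := rfl
@[simp] theorem drop_start (p : FinWalk D) (k : ℕ) : (p.drop k).start = endVert D (p.take k) :=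
  rfl
@[simp] theorem drop_ed (p : FinWalk D) (k : ℕ) : (p.drop k).ed = p.ed.drop k := rfl
@[simp] theorem append_start (p r : FinWalk D) (h) : (append p r h).start = p.start := rfl
@[simp] theorem append_ed (p r : FinWalk D) (h) : (append p r h).ed = p.ed ++ r.ed := rfl

theorem endVert_append (p r : FinWalk D) (h) : endVert D (append p r h) = endVert D r := by
  rcases eq_or_ne r.ed [] with hr | hr
  · rw [endVert_of_ed_eq_nil hr, h]
    simp [endVert, hr]
  · rw [endVert_of_ed_ne_nil (by simp [hr]), endVert_of_ed_ne_nil hr]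
    simp [List.getLast_append_of_ne_nil _ hr]

theorem endVert_drop (p : FinWalk D) (k : ℕ) : endVert D (p.drop k) = endVert D p := by
  rcases eq_or_ne (p.ed.drop k) [] with hd | hd
  · rw [endVert_of_ed_eq_nil hd, drop_start]
    simp [endVert, List.take_of_length_le (List.drop_eq_nil_iff.mp hd)]
  · rw [endVert_of_ed_ne_nil hd, endVert_of_ed_ne_nil (List.ne_nil_of_drop_ne_nil hd)]
    simp

theorem take_length_append (p r : FinWalk D) (h) : (append p r h).take p.ed.length = p :=
  ext rfl (by simp)

theorem drop_length_append (p r : FinWalk D) (h) : (append p r h).drop p.ed.length = r :=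
  ext (by rw [drop_start, take_length_append, h]) (by simp)

theorem take_length_of_prefix {p q : FinWalk D} (hs : p.start = q.start) (hpre : p.ed <+: q.ed) :
    q.take p.ed.length = p :=
  ext hs.symm (List.prefix_iff_eq_take.mp hpre).symm

theorem append_drop_of_prefix {p q : FinWalk D} (hs : p.start = q.start) (hpre : p.ed <+: q.ed)
    (h : (q.drop p.ed.length).start = endVert D p) : append p (q.drop p.ed.length) h = q := by
  obtain ⟨t, ht⟩ := hpre
  exact ext hs (by rw [append_ed, drop_ed, ← ht, List.drop_left])

noncomputable def appendFwd (p : FinWalk D) (q : FwdWalk D) (h : D.s (q.ed 0) = endVert D p) :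
    FwdWalk D where
  ed i := if hi : i < p.ed.length then p.ed[i] else q.ed (i - p.ed.length)
  chain i := by
    by_cases h1 : i + 1 < p.ed.length
    · simpa [h1, show i < p.ed.length by omega] using List.isChain_iff_getElem.mp p.chain i h1
    by_cases h2 : i < p.ed.length
    · have hne : p.ed ≠ [] := List.ne_nil_of_length_pos (by omega)
      simp only [h1, h2, dite_true, dite_false, show i + 1 - p.ed.length = 0 by omega, h,
        endVert_of_ed_ne_nil hne, List.getLast_eq_getElem]
      congr
      omega
    · simp only [h1, h2, dite_false]
      rw [show i + 1 - p.ed.length = i - p.ed.length + 1 by omega]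
      exact q.chain _

theorem begins_appendFwd (p : FinWalk D) (q : FwdWalk D) (h) : Begins D (p.appendFwd q h) p := by
  refine ⟨?_, fun i hi => by simp [appendFwd, hi]⟩
  rcases Nat.eq_zero_or_pos p.ed.length with h0 | h0
  · simp [appendFwd, h0, h, endVert_of_ed_eq_nil (List.eq_nil_of_length_eq_zero h0)]
  · simpa [appendFwd, h0] using s_ed_get_zero p h0

theorem exists_begins {p : FinWalk D} (hs : p.start ∈ CoreV D)
    (hc : ∀ e ∈ p.ed, e ∈ CoreE D) :
    ∃ z : FwdWalk D, Begins D z p ∧ ∀ i, z.ed i ∈ CoreE D := by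
  obtain ⟨q, hq, hqc⟩ := exists_fwdWalk_of_mem_coreV (endVert_mem_coreV hs hc)
  refine ⟨p.appendFwd q hq, begins_appendFwd p q hq, fun i => ?_⟩
  by_cases hi : i < p.ed.length
  · simpa [appendFwd, hi] using hc _ (List.getElem_mem hi)
  · simpa [appendFwd, hi] using hqc _

end FinWalk

def FwdWalk.take (q : FwdWalk D) (n : ℕ) : FinWalk D where
  start := D.s (q.ed 0)
  ed := (List.range n).map q.ed
  chain := List.isChain_iff_getElem.mpr fun i h => by simpa using q.chain i
  hstart e he := by cases n <;> simp_all [List.range_succ_eq_map]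

theorem FwdWalk.take_ed_prefix (q : FwdWalk D) {m n : ℕ} (h : m ≤ n) :
    (q.take m).ed <+: (q.take n).ed := by
  simpa [take, ← List.map_take, List.take_range, h] using List.take_prefix m ((q.take n).ed)

theorem Begins.eq_take {z : FwdWalk D} {p : FinWalk D} (h : Begins D z p) :
    p = z.take p.ed.length :=
  FinWalk.ext h.1.symm (List.ext_getElem (by simp [FwdWalk.take]) fun i h₁ _ => by
    simp [FwdWalk.take, h.2 i h₁])

theorem Begins.prefix_of_length_le {z : FwdWalk D} {p₁ p₂ : FinWalk D} (h₁ : Begins D z p₁)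
    (h₂ : Begins D z p₂) (hlen : p₁.ed.length ≤ p₂.ed.length) : p₁.ed <+: p₂.ed := by
  rw [h₁.eq_take, h₂.eq_take]
  exact z.take_ed_prefix hlen

theorem Begins.of_prefix {z : FwdWalk D} {p₁ p₂ : FinWalk D} (h : Begins D z p₂)
    (hs : p₁.start = p₂.start) (hpre : p₁.ed <+: p₂.ed) : Begins D z p₁ :=
  ⟨h.1.trans hs.symm, fun i hi => by
    rw [h.2 i (hi.trans_le hpre.length_le)]
    exact (hpre.getElem hi).symm⟩

end Walks

section Families

variable {D : Digraph'}

def IsExhaustiveFamily (v : CoreV D) (P : Finset (FinWalk D)) : Prop :=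
  (∀ p ∈ P, p.start = v.1 ∧ ∀ e ∈ p.ed, e ∈ CoreE D) ∧
  ∀ q : FwdWalk D, D.s (q.ed 0) = v.1 → (∀ i, q.ed i ∈ CoreE D) →
    ∃! p, p ∈ P ∧ Begins D q p

namespace IsExhaustiveFamily

variable {v : CoreV D} {P : Finset (FinWalk D)}

theorem endVert_mem_coreV (hP : IsExhaustiveFamily v P) {p : FinWalk D} (hp : p ∈ P) :
    endVert D p ∈ CoreV D :=
  FinWalk.endVert_mem_coreV ((hP.1 p hp).1 ▸ v.2) (hP.1 p hp).2

-- Any infinite core walk extending `p₂` begins with both `p₁` and `p₂`.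
theorem eq_of_prefix (hP : IsExhaustiveFamily v P) {p₁ p₂ : FinWalk D} (h₁ : p₁ ∈ P)
    (h₂ : p₂ ∈ P) (hpre : p₁.ed <+: p₂.ed) : p₁ = p₂ := by
  obtain ⟨z, hz, hzc⟩ := FinWalk.exists_begins ((hP.1 p₂ h₂).1 ▸ v.2) (hP.1 p₂ h₂).2
  have hs : p₁.start = p₂.start := (hP.1 p₁ h₁).1.trans (hP.1 p₂ h₂).1.symm
  exact (hP.2 z (hz.1.trans (hP.1 p₂ h₂).1) hzc).unique
    ⟨h₁, hz.of_prefix hs hpre⟩ ⟨h₂, hz⟩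

theorem exists_prefix (hP : IsExhaustiveFamily v P) {q : FinWalk D} (hqs : q.start = v.1)
    (hqc : ∀ e ∈ q.ed, e ∈ CoreE D) (hlen : ∀ p ∈ P, p.ed.length ≤ q.ed.length) :
    ∃ p ∈ P, p.ed <+: q.ed := by
  obtain ⟨z, hz, hzc⟩ := FinWalk.exists_begins (hqs ▸ v.2) hqc
  obtain ⟨p, ⟨hp, hzp⟩, -⟩ := hP.2 z (hz.1.trans hqs) hzc
  exact ⟨p, hp, hzp.prefix_of_length_le hz (hlen p hp)⟩

end IsExhaustiveFamily

theorem finite_setOf_walks [Finite D.E] (n : ℕ) (v : D.V) :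
    {p : FinWalk D | p.start = v ∧ p.ed.length = n ∧ ∀ e ∈ p.ed, e ∈ CoreE D}.Finite :=
  Set.Finite.of_finite_image ((List.finite_length_eq D.E n).subset (by
    rintro _ ⟨p, hp, rfl⟩
    exact hp.2.1)) fun _ hp _ hq h => FinWalk.ext (hp.1.trans hq.1.symm) h

variable [Finite D.E]

noncomputable def walksOfLength (D : Digraph') [Finite D.E] (n : ℕ) (v : D.V) :
    Finset (FinWalk D) :=
  (finite_setOf_walks n v).toFinset

theorem mem_walksOfLength {n : ℕ} {v : D.V} {p : FinWalk D} :
    p ∈ walksOfLength D n v ↔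
      p.start = v ∧ p.ed.length = n ∧ ∀ e ∈ p.ed, e ∈ CoreE D :=
  Set.Finite.mem_toFinset _

theorem walksOfLength_zero (v : D.V) : walksOfLength D 0 v = {FinWalk.nil v} := by
  ext p
  simp only [mem_walksOfLength, List.length_eq_zero_iff, Finset.mem_singleton]
  constructor
  · rintro ⟨hs, he, -⟩
    exact FinWalk.ext hs he
  · rintro rfl
    simp [FinWalk.nil]

theorem isExhaustiveFamily_walksOfLength (v : CoreV D) (n : ℕ) :
    IsExhaustiveFamily v (walksOfLength D n v.1) := by
  refine ⟨fun p hp => ?_, fun q hq hqc => ⟨q.take n, ⟨?_, ?_⟩, ?_⟩⟩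
  · obtain ⟨hs, -, hc⟩ := mem_walksOfLength.mp hp
    exact ⟨hs, hc⟩
  · refine mem_walksOfLength.mpr ⟨hq, by simp [FwdWalk.take], fun e he => ?_⟩
    obtain ⟨i, -, rfl⟩ := List.mem_map.mp he
    exact hqc i
  · exact ⟨rfl, fun i hi => by simp [FwdWalk.take]⟩
  · rintro p ⟨hp, hqp⟩
    rw [hqp.eq_take, (mem_walksOfLength.mp hp).2.1]

end Families

section Counting

variable {D : Digraph'} [Finite D.E]

noncomputable def endCount (D : Digraph') (P : Finset (FinWalk D)) : CoreV D → ℕ :=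
  fun w => (P.filter fun p => endVert D p = w.1).card

theorem sum_endVert_eq_sum_endCount {β : Type*} [AddCommMonoid β] {P : Finset (FinWalk D)}
    (hP : ∀ p ∈ P, endVert D p ∈ CoreV D) (f : D.V → β) :
    ∑ p ∈ P, f (endVert D p) = ∑ u : CoreV D, endCount D P u • f u.1 := by
  simp_rw [endCount, Finset.card_eq_sum_ones, Finset.sum_filter, Finset.sum_smul, ite_smul,
    one_smul, zero_smul]
  rw [Finset.sum_comm]
  refine Finset.sum_congr rfl fun p hp => ?_
  rw [Fintype.sum_eq_single ⟨endVert D p, hP p hp⟩ fun u hu =>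
    if_neg fun h => hu (Subtype.ext h.symm)]
  simp

theorem card_walksOfLength_filter_prefix {p : FinWalk D} (hpc : ∀ e ∈ p.ed, e ∈ CoreE D)
    {n : ℕ} (hn : p.ed.length ≤ n) (w : D.V) :
    ((walksOfLength D n p.start).filter fun q => endVert D q = w ∧ p.ed <+: q.ed).card =
      ((walksOfLength D (n - p.ed.length) (endVert D p)).filter fun r => endVert D r = w).card := by
  refine Finset.card_bij' (fun q _ => q.drop p.ed.length)
    (fun r hr => p.append r (mem_walksOfLength.mp (Finset.mem_filter.mp hr).1).1) ?_ ?_ ?_ ?_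
  · intro q hq
    simp only [Finset.mem_filter, mem_walksOfLength] at hq ⊢
    obtain ⟨⟨hqs, hql, hqc⟩, hqw, hpre⟩ := hq
    refine ⟨⟨?_, by simp [hql], fun e he => hqc e (List.mem_of_mem_drop he)⟩, ?_⟩
    · rw [FinWalk.drop_start, FinWalk.take_length_of_prefix hqs.symm hpre]
    · rw [FinWalk.endVert_drop, hqw]
  · intro r hr
    simp only [Finset.mem_filter, mem_walksOfLength] at hr ⊢
    obtain ⟨⟨-, hrl, hrc⟩, hrw⟩ := hr
    refine ⟨⟨rfl, by simp [hrl]; omega, ?_⟩, by rw [FinWalk.endVert_append, hrw], by simp⟩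
    simp only [FinWalk.append_ed, List.mem_append]
    rintro e (he | he)
    exacts [hpc e he, hrc e he]
  · intro q hq
    simp only [Finset.mem_filter, mem_walksOfLength] at hq
    exact FinWalk.append_drop_of_prefix hq.1.1.symm hq.2.2 _
  · intro r _
    exact FinWalk.drop_length_append p r _

theorem endCount_walksOfLength_eq_sum {v : CoreV D} {P : Finset (FinWalk D)}
    (hP : IsExhaustiveFamily v P) {n : ℕ} (hn : ∀ p ∈ P, p.ed.length ≤ n) :
    endCount D (walksOfLength D n v.1) =
      ∑ p ∈ P, endCount D (walksOfLength D (n - p.ed.length) (endVert D p)) := by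
  funext w
  have hsplit : (walksOfLength D n v.1).filter (fun q => endVert D q = w.1) =
      P.biUnion fun p =>
        (walksOfLength D n v.1).filter fun q => endVert D q = w.1 ∧ p.ed <+: q.ed := by
    ext q
    simp only [Finset.mem_filter, Finset.mem_biUnion]
    constructor
    · rintro ⟨hq, hqw⟩
      obtain ⟨hqs, hql, hqc⟩ := mem_walksOfLength.mp hq
      obtain ⟨p, hp, hpre⟩ := hP.exists_prefix hqs hqc fun p hp => hql ▸ hn p hp
      exact ⟨p, hp, hq, hqw, hpre⟩
    · rintro ⟨p, -, hq, hqw, -⟩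
      exact ⟨hq, hqw⟩
  have hdisj : (P : Set (FinWalk D)).PairwiseDisjoint fun p =>
      (walksOfLength D n v.1).filter fun q => endVert D q = w.1 ∧ p.ed <+: q.ed := by
    intro p₁ h₁ p₂ h₂ hne
    refine Finset.disjoint_left.mpr fun q hq₁ hq₂ => hne ?_
    obtain ⟨-, -, hpre₁⟩ := Finset.mem_filter.mp hq₁
    obtain ⟨-, -, hpre₂⟩ := Finset.mem_filter.mp hq₂
    rcases List.prefix_or_prefix_of_prefix hpre₁ hpre₂ with h | h
    exacts [hP.eq_of_prefix h₁ h₂ h, (hP.eq_of_prefix h₂ h₁ h).symm]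
  simp only [endCount, Finset.sum_apply]
  rw [hsplit, Finset.card_biUnion hdisj]
  refine Finset.sum_congr rfl fun p hp => ?_
  rw [← (hP.1 p hp).1]
  exact card_walksOfLength_filter_prefix (hP.1 p hp).2 (hn p hp) w.1

theorem endCount_walksOfLength_zero (v : CoreV D) :
    endCount D (walksOfLength D 0 v.1) = Pi.single v 1 := by
  funext w
  by_cases h : w = v
  · subst h
    simp [endCount, walksOfLength_zero, Finset.filter_singleton, FinWalk.nil, endVert]
  · simp [endCount, walksOfLength_zero, FinWalk.nil, endVert, h,
      Ne.symm (Subtype.coe_ne_coe.mpr h)]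

noncomputable def stdRefine (D : Digraph') [Finite D.E] (n : ℕ) :
    (CoreV D → ℕ) →+ (CoreV D → ℕ) where
  toFun M := ∑ v, M v • endCount D (walksOfLength D n v.1)
  map_zero' := by simp
  map_add' M M' := by simp [add_smul, Finset.sum_add_distrib]

theorem stdRefine_apply (n : ℕ) (M : CoreV D → ℕ) :
    stdRefine D n M = ∑ v, M v • endCount D (walksOfLength D n v.1) := rfl

theorem stdRefine_single (n : ℕ) (v : CoreV D) :
    stdRefine D n (Pi.single v 1) = endCount D (walksOfLength D n v.1) := by
  simp [stdRefine_apply, Pi.single_apply]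

theorem stdRefine_zero (M : CoreV D → ℕ) : stdRefine D 0 M = M := by
  simp [stdRefine_apply, endCount_walksOfLength_zero, ← Pi.single_smul', Finset.univ_sum_single]

theorem stdRefine_endCount (n : ℕ) {P : Finset (FinWalk D)}
    (hP : ∀ p ∈ P, endVert D p ∈ CoreV D) :
    stdRefine D n (endCount D P) = ∑ p ∈ P, endCount D (walksOfLength D n (endVert D p)) :=
  (sum_endVert_eq_sum_endCount hP fun u => endCount D (walksOfLength D n u)).symm

theorem endCount_walksOfLength_add (v : CoreV D) (m k : ℕ) :
    endCount D (walksOfLength D (m + k) v.1) =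
      stdRefine D k (endCount D (walksOfLength D m v.1)) := by
  have hP := isExhaustiveFamily_walksOfLength v m
  have hlen : ∀ p ∈ walksOfLength D m v.1, p.ed.length = m := fun p hp =>
    (mem_walksOfLength.mp hp).2.1
  rw [endCount_walksOfLength_eq_sum hP fun p hp => (hlen p hp).trans_le (Nat.le_add_right m k),
    stdRefine_endCount k fun p hp => hP.endVert_mem_coreV hp]
  exact Finset.sum_congr rfl fun p hp => by rw [hlen p hp, Nat.add_sub_cancel_left]

theorem stdRefine_stdRefine (m k : ℕ) (M : CoreV D → ℕ) :
    stdRefine D k (stdRefine D m M) = stdRefine D (m + k) M := by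
  rw [stdRefine_apply _ M, map_sum, stdRefine_apply (m + k)]
  simp only [map_nsmul, endCount_walksOfLength_add]

end Counting

section Refinement

variable {D : Digraph'}

theorem elemRefine_iff {M N : CoreV D → ℕ} :
    ElemRefine D M N ↔ ∃ (v : CoreV D) (P : Finset (FinWalk D)),
      0 < M v ∧ IsExhaustiveFamily v P ∧ N = M - Pi.single v 1 + endCount D P := by
  simp only [ElemRefine, IsExhaustiveFamily, funext_iff, and_assoc, Pi.add_apply, Pi.sub_apply,
    Pi.single_apply, endCount]

theorem elemRefine_single {v : CoreV D} {P : Finset (FinWalk D)} (hP : IsExhaustiveFamily v P) :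
    ElemRefine D (Pi.single v 1) (endCount D P) :=
  elemRefine_iff.mpr ⟨v, P, by simp, hP, by simp⟩

theorem ElemRefine.add_right {M N : CoreV D → ℕ} (h : ElemRefine D M N) (C : CoreV D → ℕ) :
    ElemRefine D (M + C) (N + C) := by
  obtain ⟨v, P, hv, hP, rfl⟩ := elemRefine_iff.mp h
  refine elemRefine_iff.mpr ⟨v, P, by simp; omega, hP, funext fun w => ?_⟩
  by_cases hw : w = v
  · subst hw
    simp only [Pi.add_apply, Pi.sub_apply, Pi.single_eq_same]
    omega
  · simp [hw]
    omega

theorem Refine.add_right {M N : CoreV D → ℕ} (h : Refine D M N) (C : CoreV D → ℕ) :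
    Refine D (M + C) (N + C) :=
  h.lift (· + C) fun _ _ hMN => hMN.add_right C

theorem Refine.add {M N M' N' : CoreV D → ℕ} (h : Refine D M N) (h' : Refine D M' N') :
    Refine D (M + M') (N + N') :=
  (h.add_right M').trans (by rw [add_comm N, add_comm N]; exact h'.add_right N)

theorem Refine.sum {ι : Type*} (s : Finset ι) {M N : ι → CoreV D → ℕ}
    (h : ∀ i ∈ s, Refine D (M i) (N i)) : Refine D (∑ i ∈ s, M i) (∑ i ∈ s, N i) := by
  induction s using Finset.cons_induction with
  | empty => exact .refl
  | cons i s hi ih =>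
    simp only [Finset.sum_cons]
    exact (h i (s.mem_cons_self i)).add (ih fun j hj => h j (Finset.mem_cons_of_mem hj))

theorem Refine.nsmul {M N : CoreV D → ℕ} (h : Refine D M N) (k : ℕ) :
    Refine D (k • M) (k • N) := by
  simpa using Refine.sum (Finset.range k) fun _ _ => h

end Refinement

section StandardRefinement

variable {D : Digraph'} [Finite D.E]

theorem refine_stdRefine (n : ℕ) (M : CoreV D → ℕ) : Refine D M (stdRefine D n M) := by
  have hM : ∑ v, M v • Pi.single v 1 = M := by
    simp [← Pi.single_smul', Finset.univ_sum_single]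
  have := Refine.sum Finset.univ fun v _ =>
    Refine.nsmul (.single (elemRefine_single (isExhaustiveFamily_walksOfLength v n))) (M v)
  rwa [hM] at this

theorem refine_stdRefine_of_le (M : CoreV D → ℕ) {m n : ℕ} (h : m ≤ n) :
    Refine D (stdRefine D m M) (stdRefine D n M) := by
  obtain ⟨k, rfl⟩ := Nat.exists_eq_add_of_le h
  rw [← stdRefine_stdRefine]
  exact refine_stdRefine k _

theorem refine_endCount_walksOfLength (v : CoreV D) {m n : ℕ} (h : m ≤ n) :
    Refine D (endCount D (walksOfLength D m v.1)) (endCount D (walksOfLength D n v.1)) := by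
  simpa only [stdRefine_single] using refine_stdRefine_of_le (Pi.single v 1) h

theorem ElemRefine.exists_refine_stdRefine {M N : CoreV D → ℕ} (h : ElemRefine D M N)
    (m : ℕ) :
    ∃ n, Refine D (stdRefine D m N) (stdRefine D n M) := by
  obtain ⟨v, P, hv, hP, rfl⟩ := elemRefine_iff.mp h
  obtain ⟨L, hL⟩ : ∃ L, ∀ p ∈ P, p.ed.length ≤ L :=
    ⟨P.sup (·.ed.length), fun p hp => Finset.le_sup (f := (·.ed.length)) hp⟩
  have hle : Pi.single v 1 ≤ M := fun w => by
    rcases eq_or_ne w v with rfl | hw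
    · simpa using Nat.succ_le_of_lt hv
    · simp [hw]
  obtain ⟨A, rfl⟩ : ∃ A : CoreV D → ℕ, M = A + Pi.single v 1 :=
    ⟨_, (tsub_add_cancel_of_le hle).symm⟩
  refine ⟨m + L, ?_⟩
  rw [add_tsub_cancel_right, map_add, map_add, stdRefine_single,
    stdRefine_endCount m fun p hp => hP.endVert_mem_coreV hp,
    endCount_walksOfLength_eq_sum hP fun p hp => (hL p hp).trans (Nat.le_add_left L m)]
  refine (refine_stdRefine_of_le A (Nat.le_add_right m L)).add (Refine.sum P fun p hp => ?_)
  exact refine_endCount_walksOfLength ⟨_, hP.endVert_mem_coreV hp⟩ (by have := hL p hp; omega)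

theorem Refine.exists_refine_stdRefine {M N : CoreV D → ℕ} (h : Refine D M N) (m : ℕ) :
    ∃ n, Refine D (stdRefine D m N) (stdRefine D n M) := by
  induction h using Relation.ReflTransGen.head_induction_on generalizing m with
  | refl => exact ⟨m, .refl⟩
  | head hstep _ ih =>
    obtain ⟨n₁, h₁⟩ := ih m
    obtain ⟨n₂, h₂⟩ := hstep.exists_refine_stdRefine n₁
    exact ⟨n₂, h₁.trans h₂⟩

end StandardRefinement

theorem stmt10_general (D : Digraph') [Fintype D.E] :
    Equivalence (fun M₁ M₂ : ↥(CoreV D) → ℕ => ∃ N, Refine D M₁ N ∧ Refine D M₂ N) := by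
  refine ⟨fun M => ⟨M, .refl, .refl⟩, fun ⟨N, h₁, h₂⟩ => ⟨N, h₂, h₁⟩, ?_⟩
  rintro M₁ M₂ M₃ ⟨N, h₁, h₂⟩ ⟨N', h₃, h₄⟩
  obtain ⟨n, hn⟩ := h₂.exists_refine_stdRefine 0
  obtain ⟨n', hn'⟩ := h₃.exists_refine_stdRefine 0
  rw [stdRefine_zero] at hn hn'
  exact ⟨stdRefine D (max n n') M₂,
    h₁.trans (hn.trans (refine_stdRefine_of_le M₂ (le_max_left n n'))),
    h₄.trans (hn'.trans (refine_stdRefine_of_le M₂ (le_max_right n n')))⟩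

/-- "Having a common refinement" is an equivalence relation on multisets over the
core vertices of an UDAF digraph; in particular it is transitive. -/
theorem stmt10 (D : Digraph') [Fintype D.V] [Fintype D.E] (hU : IsUDAF D) :
    Equivalence (fun M₁ M₂ : ↥(CoreV D) → ℕ => ∃ N, Refine D M₁ N ∧ Refine D M₂ N) :=
  stmt10_general D
end

section
/- Let D be a strongly connected UDAF digraph with at least one edge, and let Refine(D) ⊆ ℤ^{V_D} be the monoid generated by the rows of the relator matrix Rel_D = Adj_D − I. For nonzero multisets M₁, M₂ ∈ ℕ^{V_D}, the following are equivalent: (i) M₁ ~_D M₂; (ii) (M₁ + Refine(D)) ∩ (M₂ + Refine(D)) ≠ ∅; (iii) M₂ − M₁ lies in the subgroup of ℤ^{V_D} generated by Refine(D). -/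
noncomputable def adjCount (D : Digraph') (v w : D.V) : ℕ :=
  Set.ncard {e : D.E | D.s e = v ∧ D.t e = w}

open Classical in
/-- Row `v` of the relator matrix `Adj_D − I`. -/
noncomputable def relRow (D : Digraph') (v : D.V) : D.V → ℤ :=
  fun w => (adjCount D v w : ℤ) - (if v = w then 1 else 0)

open Classical in
/-- The congruence on `ℕ^{V_D}` generated by `v = Σ_w Adj_D(v,w)·w`. -/
noncomputable def dimConFull (D : Digraph') : AddCon (D.V → ℕ) :=
  addConGen (fun A B => ∃ v : D.V,
    A = (fun w => if w = v then 1 else 0) ∧ B = fun w => adjCount D v w)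

def toInt {D : Digraph'} (M : D.V → ℕ) : D.V → ℤ := fun v => (M v : ℤ)

def StrongConn (D : Digraph') : Prop :=
  ∀ v w : D.V, ∃ p : FinWalk D, p.start = v ∧ endVert D p = w

/-!
(i) ⇒ (ii): "`M₁ + R₁ = M₂ + R₂` for some `R₁, R₂ ∈ Refine(D)`" is a congruence on `ℕ^V`
containing the generating pairs of `∼_D`. (ii) ⇔ (iii) holds in any abelian group.

(ii) ⇒ (i): an element of `Refine(D)` can be applied within `ℕ^V` to any multiset whose entries
are all large enough. Strong connectivity, together with a vertex of out-degree two (which the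
UDAF condition provides), shows that a single vertex is `∼_D`-equivalent to a multiset containing
any prescribed one. Hence nonzero multisets may be replaced by positive ones, and every positive
`X` is equivalent to `X + S` for one fixed `S` with arbitrarily large entries. Adding this common
`S` to both sides of `M₁ + R₁ = M₂ + R₂` makes `R₁` and `R₂` applicable.
-/

namespace AddSubmonoid

variable {G : Type*}

def translateCon [AddCommMonoid G] (S : AddSubmonoid G) : AddCon G where
  r x y := ∃ a ∈ S, ∃ b ∈ S, x + a = y + b
  iseqv :=
    { refl := fun _ => ⟨0, S.zero_mem, 0, S.zero_mem, rfl⟩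
      symm := fun ⟨a, ha, b, hb, h⟩ => ⟨b, hb, a, ha, h.symm⟩
      trans := fun ⟨a, ha, b, hb, h⟩ ⟨c, hc, d, hd, h'⟩ =>
        ⟨a + c, S.add_mem ha hc, d + b, S.add_mem hd hb, by
          rw [← add_assoc, h, add_right_comm, h', add_assoc]⟩ }
  add' := fun ⟨a, ha, b, hb, h⟩ ⟨c, hc, d, hd, h'⟩ =>
    ⟨a + c, S.add_mem ha hc, b + d, S.add_mem hb hd, by
      rw [add_add_add_comm, h, h', add_add_add_comm]⟩

theorem exists_sub_eq_of_mem_addSubgroupClosure [AddCommGroup G] {s : Set G} {x : G}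
    (hx : x ∈ AddSubgroup.closure s) : ∃ a ∈ closure s, ∃ b ∈ closure s, x = a - b := by
  induction hx using AddSubgroup.closure_induction with
  | mem y hy => exact ⟨y, subset_closure hy, 0, zero_mem _, (sub_zero y).symm⟩
  | zero => exact ⟨0, zero_mem _, 0, zero_mem _, (sub_zero 0).symm⟩
  | add _ _ _ _ ihx ihy =>
    obtain ⟨a, ha, b, hb, rfl⟩ := ihx
    obtain ⟨c, hc, d, hd, rfl⟩ := ihy
    exact ⟨a + c, add_mem ha hc, b + d, add_mem hb hd, sub_add_sub_comm a b c d⟩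
  | neg _ _ ih =>
    obtain ⟨a, ha, b, hb, rfl⟩ := ih
    exact ⟨b, hb, a, ha, neg_sub a b⟩

theorem translateCon_closure_iff [AddCommGroup G] {s : Set G} {x y : G} :
    (closure s).translateCon x y ↔ y - x ∈ AddSubgroup.closure s := by
  constructor
  · rintro ⟨a, ha, b, hb, h⟩
    rw [show y - x = a - b by rw [sub_eq_sub_iff_add_eq_add, ← h, add_comm]]
    exact sub_mem (AddSubgroup.le_closure_toAddSubmonoid s ha)
      (AddSubgroup.le_closure_toAddSubmonoid s hb)
  · intro h
    obtain ⟨a, ha, b, hb, hab⟩ := exists_sub_eq_of_mem_addSubgroupClosure h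
    exact ⟨a, ha, b, hb, by rw [add_comm x, ← sub_eq_sub_iff_add_eq_add.mp hab]⟩

end AddSubmonoid

theorem Pi.single_one_le_of_pos {ι : Type*} [DecidableEq ι] {f : ι → ℕ} {i : ι}
    (h : 0 < f i) : Pi.single i 1 ≤ f := fun j => by
  rcases eq_or_ne j i with rfl | hj
  · rw [Pi.single_eq_same]; exact h
  · simp [hj]

namespace Digraph'

open Classical

variable {D : Digraph'}

def refineMonoid (D : Digraph') : AddSubmonoid (D.V → ℤ) :=
  AddSubmonoid.closure (Set.range (relRow D))

theorem toInt_add (M N : D.V → ℕ) : toInt (M + N) = toInt M + toInt N :=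
  funext fun _ => Nat.cast_add _ _

theorem toInt_injective : Function.Injective (toInt (D := D)) :=
  fun _ _ h => funext fun v => Nat.cast_injective (congrFun h v)

def refineCon (D : Digraph') : AddCon (D.V → ℕ) :=
  (refineMonoid D).translateCon.comap toInt toInt_add

theorem dimConFull_single_adjCount (v : D.V) :
    dimConFull D (Pi.single v 1) (fun w => adjCount D v w) :=
  AddConGen.Rel.of _ _ ⟨v, funext fun w => Pi.single_apply v 1 w, rfl⟩

theorem toInt_adjCount (v : D.V) :
    toInt (fun w => adjCount D v w) = toInt (Pi.single v 1) + relRow D v := by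
  funext w
  by_cases h : w = v
  · subst h; simp [toInt, relRow]
  · simp [toInt, relRow, h, Ne.symm h]

theorem dimConFull_le_refineCon : dimConFull D ≤ refineCon D := by
  refine AddCon.addConGen_le.mpr fun _ _ ⟨v, hA, hB⟩ => ?_
  refine ⟨relRow D v, AddSubmonoid.subset_closure ⟨v, rfl⟩, 0, zero_mem _, ?_⟩
  rw [hA, hB, add_zero, toInt_adjCount, ← funext (Pi.single_apply v 1)]

theorem exists_dimConFull_add_relRow {M : D.V → ℕ} {v : D.V} (hv : 0 < M v) :
    ∃ N, dimConFull D M N ∧ toInt N = toInt M + relRow D v := by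
  have hM : Pi.single v 1 + (M - Pi.single v 1) = M :=
    add_tsub_cancel_of_le (Pi.single_one_le_of_pos hv)
  refine ⟨(fun w => adjCount D v w) + (M - Pi.single v 1), ?_, ?_⟩
  · nth_rewrite 1 [← hM]
    exact (dimConFull D).add (dimConFull_single_adjCount v) ((dimConFull D).refl _)
  · conv_rhs => rw [← hM]
    rw [toInt_add, toInt_add, toInt_adjCount, add_right_comm]

theorem exists_threshold_of_mem_refineMonoid {R : D.V → ℤ} (hR : R ∈ refineMonoid D) :
    ∃ k : ℕ, ∀ X : D.V → ℕ, (∀ u, k ≤ X u) →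
      ∃ N, dimConFull D X N ∧ toInt N = toInt X + R := by
  induction hR using AddSubmonoid.closure_induction with
  | mem _ hr =>
    obtain ⟨v, rfl⟩ := hr
    exact ⟨1, fun X hX => exists_dimConFull_add_relRow (hX v)⟩
  | zero => exact ⟨0, fun X _ => ⟨X, (dimConFull D).refl X, (add_zero _).symm⟩⟩
  | add R R' _ _ ih ih' =>
    obtain ⟨k, hk⟩ := ih
    obtain ⟨k', hk'⟩ := ih'
    have hR : ∀ u, -(k : ℤ) ≤ R u := by
      obtain ⟨N, -, hN⟩ := hk (fun _ => k) fun _ => le_rfl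
      intro u
      have := congrFun hN u
      simp only [toInt, Pi.add_apply] at this
      omega
    refine ⟨k + k', fun X hX => ?_⟩
    obtain ⟨N, hXN, hN⟩ := hk X fun u => (Nat.le_add_right k k').trans (hX u)
    obtain ⟨N', hNN', hN'⟩ := hk' N fun u => by
      have h₁ := congrFun hN u
      have h₂ := hR u
      have h₃ := hX u
      simp only [toInt, Pi.add_apply] at h₁
      omega
    exact ⟨N', (dimConFull D).trans hXN hNN', by rw [hN', hN, add_assoc]⟩

def Dominates (D : Digraph') (X Y : D.V → ℕ) : Prop :=
  ∃ N, dimConFull D X N ∧ Y ≤ N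

namespace Dominates

variable {X Y Z X' Y' : D.V → ℕ}

theorem of_le (h : Y ≤ X) : Dominates D X Y := ⟨X, (dimConFull D).refl X, h⟩

theorem of_dimConFull (h : dimConFull D X Y) : Dominates D X Y := ⟨Y, h, le_rfl⟩

theorem add (h : Dominates D X Y) (h' : Dominates D X' Y') : Dominates D (X + X') (Y + Y') :=
  let ⟨N, hN, hYN⟩ := h
  let ⟨N', hN', hYN'⟩ := h'
  ⟨N + N', (dimConFull D).add hN hN', add_le_add hYN hYN'⟩

theorem trans (h : Dominates D X Y) (h' : Dominates D Y Z) : Dominates D X Z := by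
  obtain ⟨N, hXN, hYN⟩ := h
  obtain ⟨N', hYN', hZN'⟩ := h'
  refine ⟨N' + (N - Y), ?_, le_add_right hZN'⟩
  rw [← add_tsub_cancel_of_le hYN] at hXN
  exact (dimConFull D).trans hXN ((dimConFull D).add hYN' ((dimConFull D).refl _))

theorem mono_left (hX : X ≤ X') (h : Dominates D X Y) : Dominates D X' Y :=
  (of_le hX).trans h

end Dominates

theorem exists_source_eq (hsc : StrongConn D) (he : Nonempty D.E) (v : D.V) :
    ∃ e, D.s e = v := by
  obtain ⟨e₀⟩ := he
  obtain ⟨p, rfl, hp⟩ := hsc v (D.s e₀)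
  cases h : p.ed with
  | nil => exact ⟨e₀, by rw [← hp, endVert, h]; rfl⟩
  | cons e _ => exact ⟨e, p.hstart e (by simp [h])⟩

theorem exists_fwdWalk (hsc : StrongConn D) (he : Nonempty D.E) (v : D.V) :
    ∃ p : FwdWalk D, D.s (p.ed 0) = v := by
  choose next hnext using exists_source_eq hsc he
  exact ⟨⟨fun n => Nat.rec (next v) (fun _ e => next (D.t e)) n, fun _ => (hnext _).symm⟩,
    hnext v⟩

/-- Two forward walks from the same vertex first differ at a vertex with two out-edges. -/
theorem exists_ne_source_eq (hU : IsUDAF D) (hsc : StrongConn D) (he : Nonempty D.E) :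
    ∃ e₁ e₂ : D.E, e₁ ≠ e₂ ∧ D.s e₁ = D.s e₂ := by
  obtain ⟨e₀⟩ := he
  obtain ⟨p, hp⟩ := exists_fwdWalk hsc ⟨e₀⟩ (D.s e₀)
  obtain ⟨q, hq, hqp⟩ : ∃ q : FwdWalk D, D.s (q.ed 0) = D.s e₀ ∧ q ≠ p := by
    by_contra! h
    exact hU.1 _ ⟨p, hp, h⟩
  have hdiff : ∃ i, q.ed i ≠ p.ed i := by
    by_contra! h
    obtain ⟨f, _⟩ := p
    obtain ⟨g, _⟩ := q
    exact hqp (by congr; exact funext h)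
  have hsource : ∀ i, (∀ j < i, q.ed j = p.ed j) → D.s (q.ed i) = D.s (p.ed i)
    | 0, _ => hq.trans hp.symm
    | j + 1, h => by rw [← q.chain j, ← p.chain j, h j j.lt_succ_self]
  exact ⟨_, _, Nat.find_spec hdiff,
    hsource _ fun j hj => not_not.mp (Nat.find_min hdiff hj)⟩

section Finite

variable [Finite D.E]

theorem dominates_single_of_edge (e : D.E) :
    Dominates D (Pi.single (D.s e) 1) (Pi.single (D.t e) 1) := by
  refine (Dominates.of_dimConFull (dimConFull_single_adjCount _)).trans (.of_le ?_)
  refine Pi.single_one_le_of_pos ?_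
  exact (Set.ncard_pos (Set.toFinite _)).mpr ⟨e, rfl, rfl⟩

theorem dominates_single_of_chain :
    ∀ (es : List D.E) (v : D.V), es.IsChain (fun a b => D.t a = D.s b) →
      (∀ e ∈ es.head?, D.s e = v) →
      Dominates D (Pi.single v 1) (Pi.single (es.getLast?.elim v D.t) 1)
  | [], v, _, _ => .of_le le_rfl
  | e :: es, v, hes, hv => by
    obtain rfl : D.s e = v := hv e rfl
    have hes' := List.isChain_cons.mp hes
    have := (dominates_single_of_edge e).trans
      (dominates_single_of_chain es (D.t e) hes'.2 fun e' he' => (hes'.1 e' he').symm)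
    rw [List.getLast?_cons]
    revert this
    cases es.getLast? <;> exact id

theorem dominates_single_single (hsc : StrongConn D) (v w : D.V) :
    Dominates D (Pi.single v 1) (Pi.single w 1) := by
  obtain ⟨p, rfl, rfl⟩ := hsc v w
  exact dominates_single_of_chain p.ed p.start p.chain p.hstart

theorem single_add_single_le_adjCount {e₁ e₂ : D.E} (hne : e₁ ≠ e₂)
    (hs : D.s e₁ = D.s e₂) :
    Pi.single (D.t e₁) 1 + Pi.single (D.t e₂) 1 ≤ fun w => adjCount D (D.s e₁) w := by
  intro w
  have hsub : (({e₁, e₂} : Finset D.E).filter fun e => w = D.t e : Set D.E) ⊆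
      {e | D.s e = D.s e₁ ∧ D.t e = w} := by
    intro e he
    simp only [Finset.coe_filter, Finset.mem_insert, Finset.mem_singleton] at he
    rcases he with ⟨rfl | rfl, hw⟩
    · exact ⟨rfl, hw.symm⟩
    · exact ⟨hs.symm, hw.symm⟩
  calc (Pi.single (D.t e₁) 1 + Pi.single (D.t e₂) 1 : D.V → ℕ) w
      = (({e₁, e₂} : Finset D.E).filter fun e => w = D.t e).card := by
        rw [Finset.card_filter, Finset.sum_pair hne]
        simp only [Pi.add_apply, Pi.single_apply]
    _ ≤ adjCount D (D.s e₁) w := by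
        rw [← Set.ncard_coe_finset]
        exact Set.ncard_le_ncard hsub (Set.toFinite _)

theorem dominates_single_add_self (hU : IsUDAF D) (hsc : StrongConn D) (he : Nonempty D.E)
    (v : D.V) : Dominates D (Pi.single v 1) (Pi.single v 1 + Pi.single v 1) := by
  obtain ⟨e₁, e₂, hne, hs⟩ := exists_ne_source_eq hU hsc he
  exact (dominates_single_single hsc v (D.s e₁)).trans <|
    (Dominates.of_dimConFull (dimConFull_single_adjCount _)).trans <|
    (Dominates.of_le (single_add_single_le_adjCount hne hs)).trans <|
    (dominates_single_single hsc _ v).add (dominates_single_single hsc _ v)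

variable [Finite D.V]

theorem single_dominates (hU : IsUDAF D) (hsc : StrongConn D) (he : Nonempty D.E)
    (v : D.V) (Y : D.V → ℕ) : Dominates D (Pi.single v 1) Y := by
  have hdouble := dominates_single_add_self hU hsc he v
  induction Y using Pi.single_induction with
  | zero => exact .of_le fun _ => Nat.zero_le _
  | add Y Y' h h' => exact hdouble.trans (h.add h')
  | single w m =>
    induction m with
    | zero => exact .of_le (by simp)
    | succ m ih =>
      rw [Pi.single_add]
      exact hdouble.trans (ih.add (dominates_single_single hsc v w))

theorem Dominates.of_ne_zero (hU : IsUDAF D) (hsc : StrongConn D) (he : Nonempty D.E)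
    {M : D.V → ℕ} (hM : M ≠ 0) (Y : D.V → ℕ) : Dominates D M Y := by
  obtain ⟨v, hv⟩ := Function.ne_iff.mp hM
  exact (single_dominates hU hsc he v Y).mono_left
    (Pi.single_one_le_of_pos (Nat.pos_of_ne_zero hv))

theorem exists_forall_dimConFull_add (hU : IsUDAF D) (hsc : StrongConn D) (he : Nonempty D.E)
    (n : ℕ) : ∃ S : D.V → ℕ, (∀ u, n ≤ S u) ∧
      ∀ X : D.V → ℕ, (∀ u, 0 < X u) → dimConFull D X (X + S) := by
  obtain ⟨e₀⟩ := he
  set w := D.s e₀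
  obtain ⟨N, hwN, hN⟩ := single_dominates hU hsc ⟨e₀⟩ w (Pi.single w 1 + fun _ => n)
  refine ⟨N - Pi.single w 1, fun u => ?_, fun X hX => ?_⟩
  · have := hN u
    simp only [Pi.add_apply, Pi.sub_apply] at this ⊢
    omega
  · have hwX : Pi.single w 1 ≤ X := Pi.single_one_le_of_pos (hX w)
    have hadd := (dimConFull D).add hwN ((dimConFull D).refl (X - Pi.single w 1))
    rwa [add_tsub_cancel_of_le hwX, show N + (X - Pi.single w 1) = X + (N - Pi.single w 1) from
      funext fun u => by
        have h₁ := hN u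
        have h₂ := hwX u
        simp only [Pi.add_apply, Pi.sub_apply] at h₁ h₂ ⊢
        omega] at hadd

theorem dimConFull_of_refineCon_of_pos (hU : IsUDAF D) (hsc : StrongConn D) (he : Nonempty D.E)
    {X Y : D.V → ℕ} (hX : ∀ u, 0 < X u) (hY : ∀ u, 0 < Y u) (h : refineCon D X Y) :
    dimConFull D X Y := by
  obtain ⟨R₁, hR₁, R₂, hR₂, hXY⟩ := h
  obtain ⟨k₁, hk₁⟩ := exists_threshold_of_mem_refineMonoid hR₁
  obtain ⟨k₂, hk₂⟩ := exists_threshold_of_mem_refineMonoid hR₂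
  obtain ⟨S, hS, hXS⟩ := exists_forall_dimConFull_add hU hsc he (k₁ + k₂)
  obtain ⟨N₁, hN₁, hN₁eq⟩ := hk₁ (X + S) fun u =>
    (Nat.le_add_right k₁ k₂).trans ((hS u).trans (Nat.le_add_left _ _))
  obtain ⟨N₂, hN₂, hN₂eq⟩ := hk₂ (Y + S) fun u =>
    (Nat.le_add_left k₂ k₁).trans ((hS u).trans (Nat.le_add_left _ _))
  obtain rfl : N₁ = N₂ := toInt_injective <| by
    rw [hN₁eq, hN₂eq, toInt_add, toInt_add, add_right_comm, hXY, add_right_comm]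
  exact (hXS X hX).trans (hN₁.trans (hN₂.symm.trans (hXS Y hY).symm))

theorem dimConFull_iff_refineCon (hU : IsUDAF D) (hsc : StrongConn D) (he : Nonempty D.E)
    {M₁ M₂ : D.V → ℕ} (h₁ : M₁ ≠ 0) (h₂ : M₂ ≠ 0) :
    dimConFull D M₁ M₂ ↔ refineCon D M₁ M₂ := by
  refine ⟨fun h => dimConFull_le_refineCon h, fun h => ?_⟩
  obtain ⟨N₁, hMN₁, hN₁⟩ := Dominates.of_ne_zero hU hsc he h₁ 1
  obtain ⟨N₂, hMN₂, hN₂⟩ := Dominates.of_ne_zero hU hsc he h₂ 1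
  have hN : refineCon D N₁ N₂ := (refineCon D).trans
    ((refineCon D).trans ((refineCon D).symm (dimConFull_le_refineCon hMN₁)) h)
    (dimConFull_le_refineCon hMN₂)
  exact hMN₁.trans ((dimConFull_of_refineCon_of_pos hU hsc he hN₁ hN₂ hN).trans hMN₂.symm)

end Finite

end Digraph'

/-- For nonzero multisets over the vertices of a strongly connected UDAF digraph
with an edge, the dimension congruence `∼_D`, the "common translate by the refining
monoid" relation, and membership of the difference in the subgroup generated by the
rows of the relator matrix, all coincide. -/
theorem stmt14 (D : Digraph') [Fintype D.V] [Fintype D.E]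
    (hU : IsUDAF D) (hsc : StrongConn D) (he : Nonempty D.E)
    (M₁ M₂ : D.V → ℕ) (h₁ : M₁ ≠ 0) (h₂ : M₂ ≠ 0) :
    (dimConFull D M₁ M₂ ↔
      ∃ R₁ ∈ AddSubmonoid.closure (Set.range (relRow D)),
        ∃ R₂ ∈ AddSubmonoid.closure (Set.range (relRow D)),
          toInt M₁ + R₁ = toInt M₂ + R₂) ∧
    (dimConFull D M₁ M₂ ↔
      toInt M₂ - toInt M₁ ∈ AddSubgroup.closure (Set.range (relRow D))) := by
  have key := Digraph'.dimConFull_iff_refineCon hU hsc he h₁ h₂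
  exact ⟨key, key.trans AddSubmonoid.translateCon_closure_iff⟩
end

section
/- If A is an n×n matrix and B an m×m matrix over ℤ, and B is obtained from A by a finite sequence of the operations (1) inserting a new row and column which are zero except for a −1 diagonal entry, (2) adding one row to a different row, (3) adding one column to a different column, (4) inverses of these, and (5) simultaneous permutation of rows and columns by the same permutation, then det(A) = (−1)^{n−m} det(B). -/
/-- One elementary matrix move: cross insertion, row addition, column addition,
or simultaneous permutation of rows and columns. -/
inductive MStep : (Σ n, Matrix (Fin n) (Fin n) ℤ) → (Σ n, Matrix (Fin n) (Fin n) ℤ) → Prop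
  | cross {k : ℕ} (A : Matrix (Fin k) (Fin k) ℤ) (B : Matrix (Fin (k + 1)) (Fin (k + 1)) ℤ)
      (i : Fin (k + 1))
      (h₁ : ∀ a b : Fin k, B (i.succAbove a) (i.succAbove b) = A a b)
      (h₂ : B i i = -1) (h₃ : ∀ j, j ≠ i → B i j = 0 ∧ B j i = 0) :
      MStep ⟨k, A⟩ ⟨k + 1, B⟩
  | rowAdd {k : ℕ} (A : Matrix (Fin k) (Fin k) ℤ) (i j : Fin k) (hij : i ≠ j) :
      MStep ⟨k, A⟩ ⟨k, A.updateRow i (A i + A j)⟩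
  | colAdd {k : ℕ} (A : Matrix (Fin k) (Fin k) ℤ) (i j : Fin k) (hij : i ≠ j) :
      MStep ⟨k, A⟩ ⟨k, Matrix.of fun a b => if b = j then A a j + A a i else A a b⟩
  | permute {k : ℕ} (A : Matrix (Fin k) (Fin k) ℤ) (σ : Equiv.Perm (Fin k)) :
      MStep ⟨k, A⟩ ⟨k, Matrix.of fun a b => A (σ a) (σ b)⟩

/-- A finite sequence of moves or their inverses. -/
def Moves : (Σ n, Matrix (Fin n) (Fin n) ℤ) → (Σ n, Matrix (Fin n) (Fin n) ℤ) → Prop :=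
  Relation.ReflTransGen (fun X Y => MStep X Y ∨ MStep Y X)

lemma mstep_det {X Y : Σ n, Matrix (Fin n) (Fin n) ℤ} (h : MStep X Y) :
    (-1 : ℤ) ^ X.1 * X.2.det = (-1 : ℤ) ^ Y.1 * Y.2.det := by
  induction h with
  | cross A B i h₁ h₂ h₃ =>
    have hB : B.det = -A.det := by
      rw [Matrix.det_succ_row B i, Finset.sum_eq_single i]
      · have hsub : B.submatrix i.succAbove i.succAbove = A := by
          ext a b; exact h₁ a b
        rw [h₂, hsub]
        have h4 : ((-1:ℤ))^((i:ℕ)+(i:ℕ)) = 1 := by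
          rw [← two_mul, pow_mul]; norm_num
        rw [h4]; ring
      · intro j _ hj
        rw [(h₃ j hj).1]; ring
      · intro hi; exact absurd (Finset.mem_univ i) hi
    simp only [hB, pow_succ]; ring
  | rowAdd A i j hij =>
    simp [Matrix.det_updateRow_add_self A hij]
  | colAdd A i j hij =>
    have : (Matrix.of fun a b => if b = j then A a j + A a i else A a b)
        = A.updateCol j (fun k => A k j + A k i) := by
      ext a b
      by_cases hb : b = j <;> simp [Matrix.updateCol_apply, hb]
    simp only [this]
    rw [Matrix.det_updateCol_add_self A hij.symm]
  | permute A σ =>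
    have : (Matrix.of fun a b => A (σ a) (σ b)) = A.submatrix σ σ := rfl
    rw [this, Matrix.det_submatrix_equiv_self]

/-- The determinant obstruction: a sequence of matrix moves from an `n × n` matrix
`A` to an `m × m` matrix `B` forces `det A = (−1)^{n−m} det B`. -/
theorem stmt18 (n m : ℕ) (A : Matrix (Fin n) (Fin n) ℤ) (B : Matrix (Fin m) (Fin m) ℤ)
    (h : Moves ⟨n, A⟩ ⟨m, B⟩) :
    (-1 : ℤ) ^ m * A.det = (-1 : ℤ) ^ n * B.det := by
  have key : ∀ {X Y : Σ n, Matrix (Fin n) (Fin n) ℤ}, Moves X Y →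
      (-1 : ℤ) ^ X.1 * X.2.det = (-1 : ℤ) ^ Y.1 * Y.2.det := by
    intro X Y hXY
    induction hXY with
    | refl => rfl
    | tail _ hstep ih =>
      rcases hstep with hs | hs
      · exact ih.trans (mstep_det hs)
      · exact ih.trans (mstep_det hs).symm
  have := key h
  simp only at this
  have hgoal : (-1 : ℤ) ^ (n + m) * ((-1 : ℤ) ^ n * A.det)
      = (-1 : ℤ) ^ (n + m) * ((-1 : ℤ) ^ m * B.det) := by rw [this]
  calc (-1 : ℤ) ^ m * A.det = (-1 : ℤ) ^ (n + m) * ((-1 : ℤ) ^ n * A.det) := by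
        rw [← mul_assoc, ← pow_add]
        congr 1
        rw [show n + m + n = m + 2 * n by ring, pow_add, pow_mul]
        norm_num
    _ = (-1 : ℤ) ^ (n + m) * ((-1 : ℤ) ^ m * B.det) := hgoal
    _ = (-1 : ℤ) ^ n * B.det := by
        rw [← mul_assoc, ← pow_add]
        congr 1
        rw [show n + m + m = n + 2 * m by ring, pow_add, pow_mul]
        norm_num
end

section
/- The relator matrices [[0,1],[1,0]] and [[2,1],[1,1]] are inequivalent under the matrix moves of Theorem 7.8 (cross insertion/deletion with −1 diagonal, row additions, column additions, and simultaneous permutations), because their determinants are −1 and 1 respectively while the moves can only change the determinant by a factor (−1)^{size change}, and here both matrices have the same size. Nevertheless, the cokernels ℤ²/⟨rows⟩ of both matrices are trivial, so the corresponding UDAF dimension groups are isomorphic (both trivial). -/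
/-- The signed determinant invariant. -/
def sdet (X : Σ n, Matrix (Fin n) (Fin n) ℤ) : ℤ := (-1) ^ X.1 * X.2.det

theorem sdet_step {X Y : Σ n, Matrix (Fin n) (Fin n) ℤ} (h : MStep X Y) :
    sdet X = sdet Y := by
  induction h with
  | cross A B i h₁ h₂ h₃ =>
      have hB : B.det = -A.det := by
        have hsub : B.submatrix i.succAbove i.succAbove = A := by
          ext a b; exact h₁ a b
        rw [Matrix.det_succ_row B i, Finset.sum_eq_single i]
        · rw [h₂, hsub]
          have : ((-1 : ℤ)) ^ ((i : ℕ) + (i : ℕ)) = 1 := by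
            rw [← two_mul, pow_mul]; norm_num
          rw [this]; ring
        · intro j _ hj
          simp [(h₃ j hj).1]
        · intro hi; exact absurd (Finset.mem_univ i) hi
      simp [sdet, hB, pow_succ]
  | rowAdd A i j hij =>
      simp [sdet, Matrix.det_updateRow_add_self A hij]
  | colAdd A i j hij =>
      have : (Matrix.of fun a b => if b = j then A a j + A a i else A a b) =
          A.updateCol j (fun k => A k j + A k i) := by
        ext a b
        simp [Matrix.updateCol_apply]
      rw [sdet, sdet, this, Matrix.det_updateCol_add_self A hij.symm]
  | permute A σ =>
      have : (Matrix.of fun a b => A (σ a) (σ b)) = A.submatrix σ σ := rfl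
      rw [sdet, sdet, this, Matrix.det_submatrix_equiv_self]

theorem sdet_moves {X Y : Σ n, Matrix (Fin n) (Fin n) ℤ} (h : Moves X Y) :
    sdet X = sdet Y := by
  induction h with
  | refl => rfl
  | tail _ hstep ih =>
      rcases hstep with h | h
      · rw [ih, sdet_step h]
      · rw [ih, sdet_step h]

/-- The relator matrices `[[0,1],[1,0]]` and `[[2,1],[1,1]]` are not related by the
matrix moves (their determinants are `−1` and `1`), yet the rows of each generate
all of `ℤ²`, so both cokernels (UDAF dimension groups) are trivial, hence
isomorphic. -/
theorem stmt19 :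
    ¬ Moves ⟨2, !![(0 : ℤ), 1; 1, 0]⟩ ⟨2, !![(2 : ℤ), 1; 1, 1]⟩ ∧
    (!![(0 : ℤ), 1; 1, 0]).det = -1 ∧ (!![(2 : ℤ), 1; 1, 1]).det = 1 ∧
    AddSubgroup.closure (Set.range fun i => (!![(0 : ℤ), 1; 1, 0]) i) =
      (⊤ : AddSubgroup (Fin 2 → ℤ)) ∧
    AddSubgroup.closure (Set.range fun i => (!![(2 : ℤ), 1; 1, 1]) i) =
      (⊤ : AddSubgroup (Fin 2 → ℤ)) := by
  refine ⟨?_, by simp [Matrix.det_fin_two], by simp [Matrix.det_fin_two], ?_, ?_⟩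
  · intro h
    have := sdet_moves h
    simp [sdet, Matrix.det_fin_two] at this
  · rw [eq_top_iff]
    intro v _
    have h0 : (!![(0 : ℤ), 1; 1, 0]) 0 ∈ AddSubgroup.closure
        (Set.range fun i => (!![(0 : ℤ), 1; 1, 0]) i) :=
      AddSubgroup.subset_closure ⟨0, rfl⟩
    have h1 : (!![(0 : ℤ), 1; 1, 0]) 1 ∈ AddSubgroup.closure
        (Set.range fun i => (!![(0 : ℤ), 1; 1, 0]) i) :=
      AddSubgroup.subset_closure ⟨1, rfl⟩
    have : v = v 0 • (!![(0 : ℤ), 1; 1, 0]) 1 + v 1 • (!![(0 : ℤ), 1; 1, 0]) 0 := by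
      funext b; fin_cases b <;> simp [Matrix.cons_val_zero, Matrix.cons_val_one]
    rw [this]
    exact AddSubgroup.add_mem _ (AddSubgroup.zsmul_mem _ h1 _)
      (AddSubgroup.zsmul_mem _ h0 _)
  · rw [eq_top_iff]
    intro v _
    have h0 : (!![(2 : ℤ), 1; 1, 1]) 0 ∈ AddSubgroup.closure
        (Set.range fun i => (!![(2 : ℤ), 1; 1, 1]) i) :=
      AddSubgroup.subset_closure ⟨0, rfl⟩
    have h1 : (!![(2 : ℤ), 1; 1, 1]) 1 ∈ AddSubgroup.closure
        (Set.range fun i => (!![(2 : ℤ), 1; 1, 1]) i) :=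
      AddSubgroup.subset_closure ⟨1, rfl⟩
    have : v = (v 0) • ((!![(2 : ℤ), 1; 1, 1]) 0 - (!![(2 : ℤ), 1; 1, 1]) 1) +
        (v 1) • ((2 : ℤ) • (!![(2 : ℤ), 1; 1, 1]) 1 - (!![(2 : ℤ), 1; 1, 1]) 0) := by
      funext b; fin_cases b <;> simp
    rw [this]
    exact AddSubgroup.add_mem _
      (AddSubgroup.zsmul_mem _ (AddSubgroup.sub_mem _ h0 h1) _)
      (AddSubgroup.zsmul_mem _ (AddSubgroup.sub_mem _ (AddSubgroup.zsmul_mem _ h1 _) h0) _)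
end
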